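/- arXiv:1809.08050 — 2 statements merged into one kernel-verified Lean document; each statement's English description precedes it below -/
import Mathlib

section
/- For every shift-invariant proper 𝔽₂-subspace V of X_0, the set G_V = { f ∈ G : ∃ n ∈ ℤ, v ∈ X_0, ∀x, f(x) ∈ σ^n(x) + v + V } is a proper subgroup of G. -/
noncomputable section

/-- The full binary shift space `{0,1}^ℤ`. -/
abbrev X : Type := ℤ → ZMod 2

instance : Group (X ≃ₜ X) where
  mul f g := g.trans f
  one := Homeomorph.refl X
  inv := Homeomorph.symm
  mul_assoc f g h := rfl
  one_mul f := Homeomorph.ext fun _ => rfl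
  mul_one f := Homeomorph.ext fun _ => rfl
  inv_mul_cancel f := Homeomorph.ext fun x => f.symm_apply_apply x

/-- The shift `σ^n`, `σ^n(x)_i = x_{i+n}`. -/
def shiftPow (n : ℤ) : X ≃ₜ X where
  toFun x i := x (i + n)
  invFun x i := x (i - n)
  left_inv x := funext fun i => congrArg x (by ring)
  right_inv x := funext fun i => congrArg x (by ring)
  continuous_toFun := continuous_pi fun i => continuous_apply (i + n)
  continuous_invFun := continuous_pi fun i => continuous_apply (i - n)

/-- The shift `σ`. -/
def shiftHomeo : X ≃ₜ X := shiftPow 1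

/-- A local permutation: a self-homeomorphism fixing all coordinates outside a bounded interval. -/
def IsLocalPerm (f : X ≃ₜ X) : Prop :=
  ∃ r : ℤ, ∀ (x : X) (i : ℤ), r ≤ |i| → f x i = x i

/-- The group `G` generated by the shift and the local permutations. -/
def Ggrp : Subgroup (X ≃ₜ X) :=
  Subgroup.closure ({shiftHomeo} ∪ {f | IsLocalPerm f})

/-- Build a homeomorphism of `X` from an involutive continuous map. -/
def mkInvHomeo (F : X → X) (h : Function.Involutive F) (hc : Continuous F) : X ≃ₜ X :=
  ⟨Function.Involutive.toPerm F h, hc, hc⟩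

/-!
`G_V` is the intersection of `G` with the group of homeomorphisms that agree, modulo `V`, with an
affine map `x ↦ σⁿ x + c`; shift invariance of `V` makes the latter closed under composition and
inversion. It is a proper subgroup because the local permutation `x ↦ x + x₁x₂ e₀` is genuinely
quadratic: any map affine modulo `V` has all its second differences in `V`, while this one has
second difference `e₀` at `(e₁, e₂)`, which would put `e₀`, all its shifts and hence all of `X₀`
into `V`.
-/

lemma shiftPow_apply (n : ℤ) (x : X) (i : ℤ) : shiftPow n x i = x (i + n) := rfl

lemma shiftPow_zero (x : X) : shiftPow 0 x = x := by
  ext i; simp [shiftPow_apply]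

lemma shiftPow_shiftPow (m n : ℤ) (x : X) : shiftPow m (shiftPow n x) = shiftPow (m + n) x := by
  ext i; simp only [shiftPow_apply, add_assoc]

lemma shiftPow_apply_zero (n : ℤ) : shiftPow n 0 = 0 := rfl

lemma shiftPow_add (n : ℤ) (x y : X) : shiftPow n (x + y) = shiftPow n x + shiftPow n y := rfl

lemma shiftPow_single (n a : ℤ) : shiftPow n (Pi.single a 1) = Pi.single (a - n) 1 := by
  ext i
  simp only [shiftPow_apply, Pi.single_apply, eq_sub_iff_add_eq]

lemma finite_support_shiftPow (n : ℤ) {c : X} (hc : (Function.support c).Finite) :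
    (Function.support (shiftPow n c)).Finite :=
  hc.preimage (add_left_injective n).injOn

lemma homeomorph_mul_apply (f g : X ≃ₜ X) (x : X) : (f * g) x = f (g x) := rfl

lemma homeomorph_inv_apply (f : X ≃ₜ X) (x : X) : f⁻¹ x = f.symm x := rfl

def IsShiftInvariant (V : Submodule (ZMod 2) X) : Prop :=
  ∀ (n : ℤ), ∀ v ∈ V, shiftPow n v ∈ V

lemma isShiftInvariant_of_shift_one {V : Submodule (ZMod 2) X}
    (hVs : ∀ v ∈ V, (fun i => v (i + 1)) ∈ V) (hVs' : ∀ v ∈ V, (fun i => v (i - 1)) ∈ V) :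
    IsShiftInvariant V := by
  intro n v hv
  induction n using Int.induction_on with
  | zero => rwa [shiftPow_zero]
  | succ k ih =>
    have h : shiftPow 1 (shiftPow k v) ∈ V := hVs _ ih
    rwa [shiftPow_shiftPow, add_comm] at h
  | pred k ih =>
    have h : shiftPow (-1) (shiftPow (-k) v) ∈ V := hVs' _ ih
    rwa [shiftPow_shiftPow, add_comm, ← sub_eq_add_neg] at h

def IsAffineMod (V : Submodule (ZMod 2) X) (f : X ≃ₜ X) : Prop :=
  ∃ (n : ℤ) (c : X), (Function.support c).Finite ∧ ∀ x : X, f x + shiftPow n x + c ∈ V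

def affineModSubgroup (V : Submodule (ZMod 2) X) (hV : IsShiftInvariant V) :
    Subgroup (X ≃ₜ X) where
  carrier := {f | IsAffineMod V f}
  one_mem' := ⟨0, 0, by simp, fun x => by simp [shiftPow_zero, CharTwo.add_self_eq_zero]⟩
  mul_mem' := by
    rintro f g ⟨m, c, hc, hf⟩ ⟨n, d, hd, hg⟩
    refine ⟨m + n, c + shiftPow m d, (hc.union (finite_support_shiftPow m hd)).subset
      (Function.support_add _ _), fun x => ?_⟩
    -- the two copies of `σ^m (g x)` cancel in characteristic two
    convert V.add_mem (hf (g x)) (hV m _ (hg x)) using 1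
    simp only [homeomorph_mul_apply, shiftPow_add, shiftPow_shiftPow]
    grind
  inv_mem' := by
    rintro f ⟨n, c, hc, hf⟩
    refine ⟨-n, shiftPow (-n) c, finite_support_shiftPow _ hc, fun x => ?_⟩
    convert hV (-n) _ (hf (f.symm x)) using 1
    simp only [homeomorph_inv_apply, Homeomorph.apply_symm_apply, shiftPow_add,
      shiftPow_shiftPow, neg_add_cancel, shiftPow_zero]
    abel

lemma IsAffineMod.second_difference_mem {V : Submodule (ZMod 2) X} {f : X ≃ₜ X}
    (hf : IsAffineMod V f) (x y : X) : f (x + y) + f x + f y + f 0 ∈ V := by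
  obtain ⟨n, c, -, hf⟩ := hf
  convert V.add_mem (V.add_mem (hf (x + y)) (hf x)) (V.add_mem (hf y) (hf 0)) using 1
  simp only [shiftPow_add, shiftPow_apply_zero]
  grind

lemma Submodule.mem_of_forall_single_mem {ι R : Type*} [DecidableEq ι] [Semiring R]
    (V : Submodule R (ι → R)) (hV : ∀ a, Pi.single a 1 ∈ V) {w : ι → R}
    (hw : (Function.support w).Finite) : w ∈ V := by
  have hw_eq : w = ∑ a ∈ hw.toFinset, w a • Pi.single a 1 := by
    ext i
    simp [Finset.sum_apply, Pi.single_apply]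
  rw [hw_eq]
  exact V.sum_mem fun a _ => V.smul_mem _ (hV a)

def toggleMap : X → X := fun x => x + Pi.single 0 (x 1 * x 2)

lemma toggleMap_apply_of_ne_zero (x : X) {i : ℤ} (hi : i ≠ 0) : toggleMap x i = x i := by
  simp [toggleMap, hi]

lemma toggleMap_involutive : Function.Involutive toggleMap := by
  intro x
  rw [toggleMap, toggleMap_apply_of_ne_zero x one_ne_zero, toggleMap_apply_of_ne_zero x two_ne_zero,
    toggleMap, add_assoc, CharTwo.add_self_eq_zero, add_zero]

lemma toggleMap_continuous : Continuous toggleMap := by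
  unfold toggleMap
  fun_prop

def toggle : X ≃ₜ X := mkInvHomeo toggleMap toggleMap_involutive toggleMap_continuous

lemma toggle_apply (x : X) : toggle x = toggleMap x := rfl

lemma toggle_mem_Ggrp : toggle ∈ Ggrp := by
  refine Subgroup.subset_closure (Or.inr ⟨1, fun x i hi => toggleMap_apply_of_ne_zero x ?_⟩)
  rintro rfl
  simp at hi

lemma toggle_second_difference :
    toggle (Pi.single 1 1 + Pi.single 2 1) + toggle (Pi.single 1 1) + toggle (Pi.single 2 1)
      + toggle 0 = Pi.single 0 1 := by
  simp only [toggle_apply, toggleMap, Pi.add_apply, Pi.single_eq_same, ne_eq, OfNat.one_ne_ofNat,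
    not_false_eq_true, Pi.single_eq_of_ne, add_zero, OfNat.ofNat_ne_one, zero_add, mul_one, mul_zero,
    Pi.single_zero, Pi.zero_apply]
  grind

lemma not_isAffineMod_toggle {V : Submodule (ZMod 2) X} (hV : IsShiftInvariant V)
    (hVproper : ∃ w : X, (Function.support w).Finite ∧ w ∉ V) : ¬ IsAffineMod V toggle := by
  intro hf
  obtain ⟨w, hw, hwV⟩ := hVproper
  have h0 : Pi.single 0 1 ∈ V := toggle_second_difference ▸ hf.second_difference_mem _ _
  refine hwV (V.mem_of_forall_single_mem (fun a => ?_) hw)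
  simpa [shiftPow_single] using hV (-a) _ h0

theorem stmt11_general (V : Submodule (ZMod 2) X)
    (hVs : ∀ v ∈ V, (fun i => v (i + 1)) ∈ V)
    (hVs' : ∀ v ∈ V, (fun i => v (i - 1)) ∈ V)
    (hVproper : ∃ w : X, (Function.support w).Finite ∧ w ∉ V) :
    ∃ H : Subgroup (X ≃ₜ X),
      (H : Set (X ≃ₜ X)) =
        {f : X ≃ₜ X | f ∈ Ggrp ∧ ∃ (n : ℤ) (c : X), (Function.support c).Finite ∧
          ∀ x : X, (fun i => f x i + x (i + n) + c i) ∈ V} ∧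
      H < Ggrp := by
  have hV := isShiftInvariant_of_shift_one hVs hVs'
  refine ⟨Ggrp ⊓ affineModSubgroup V hV, rfl, SetLike.lt_iff_le_and_exists.2
    ⟨inf_le_left, toggle, toggle_mem_Ggrp, fun h => ?_⟩⟩
  exact not_isAffineMod_toggle hV hVproper (Subgroup.mem_inf.1 h).2

/-- For every shift-invariant proper `𝔽₂`-subspace `V` of the space `X₀` of finitely supported
configurations, the set `G_V` is a proper subgroup of `G`. -/
theorem stmt11 (V : Submodule (ZMod 2) X)
    (hV0 : ∀ v ∈ V, (Function.support v).Finite)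
    (hVs : ∀ v ∈ V, (fun i => v (i + 1)) ∈ V)
    (hVs' : ∀ v ∈ V, (fun i => v (i - 1)) ∈ V)
    (hVproper : ∃ w : X, (Function.support w).Finite ∧ w ∉ V) :
    ∃ H : Subgroup (X ≃ₜ X),
      (H : Set (X ≃ₜ X)) =
        {f : X ≃ₜ X | f ∈ Ggrp ∧ ∃ (n : ℤ) (c : X), (Function.support c).Finite ∧
          ∀ x : X, (fun i => f x i + x (i + n) + c i) ∈ V} ∧
      H < Ggrp :=
  stmt11_general V hVs hVs' hVproper
end
end

section
/- The set G_R = { σ^n ∘ f : n ∈ ℤ, f a local permutation such that there exist functions g_i with f(x)_i = g_i(x|_{(-∞,i]}) for all x, i } is a proper subgroup of G. -/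
noncomputable section

/-- A local permutation is right-moving if each output coordinate depends only on the input
coordinates to its left (inclusive). -/
def RightMoving (f : X ≃ₜ X) : Prop :=
  ∃ g : (i : ℤ) → ({j : ℤ // j ≤ i} → ZMod 2) → ZMod 2,
    ∀ (x : X) (i : ℤ), f x i = g i fun j => x (j : ℤ)

/-!
Let `K` be the group of right-moving local permutations. Conjugating by `σ` preserves both
locality and right-movingness, so `G_R = ⟨σ⟩ * K = ⟨σ⟩ ⊔ K` is a subgroup. The only
non-formal point is that `K` is closed under inverses. Suppose `f` fixes every coordinate
`j` with `|j| ≥ r`. Then, for `R ≥ max r i`, `f` injectively maps the finite set of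
configurations with a prescribed left part on `(-∞, i]` that vanish beyond `R` into a set of
the same size. So by pigeonhole `f` is onto that set, which means `f⁻¹(x)_i` depends only on
`x` restricted to `(-∞, i]`.

The swap `s` of coordinates `0, 1` lies in `G`. If `s = σ^n f` with `f ∈ K`, then
`σ^n = s f⁻¹` is local, so `n = 0`. But `s` is not right-moving, because `s(x)_0 = x_1`.
-/

theorem rightMoving_iff {f : X ≃ₜ X} :
    RightMoving f ↔ ∀ (u v : X) (i : ℤ), (∀ j ≤ i, u j = v j) → f u i = f v i := by
  constructor
  · rintro ⟨g, hg⟩ u v i h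
    rw [hg, hg]
    congr 1
    funext j
    exact h j j.2
  · intro h
    refine ⟨fun i w => f (fun j => if hj : j ≤ i then w ⟨j, hj⟩ else 0) i, fun x i => ?_⟩
    exact h _ _ i fun j hj => by rw [dif_pos hj]

theorem RightMoving.apply_eq {f : X ≃ₜ X} (hf : RightMoving f) {u v : X} {i : ℤ}
    (h : ∀ j ≤ i, u j = v j) : f u i = f v i :=
  rightMoving_iff.1 hf u v i h

theorem IsLocalPerm.mul {f g : X ≃ₜ X} (hf : IsLocalPerm f) (hg : IsLocalPerm g) :
    IsLocalPerm (f * g) := by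
  obtain ⟨r, hr⟩ := hf
  obtain ⟨s, hs⟩ := hg
  refine ⟨max r s, fun x i hi => ?_⟩
  change f (g x) i = x i
  rw [hr _ _ (le_of_max_le_left hi), hs _ _ (le_of_max_le_right hi)]

theorem IsLocalPerm.inv {f : X ≃ₜ X} (hf : IsLocalPerm f) : IsLocalPerm f⁻¹ := by
  obtain ⟨r, hr⟩ := hf
  refine ⟨r, fun x i hi => ?_⟩
  simpa using (hr (f.symm x) i hi).symm

theorem RightMoving.mul {f g : X ≃ₜ X} (hf : RightMoving f) (hg : RightMoving g) :
    RightMoving (f * g) :=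
  rightMoving_iff.2 fun _ _ _ h =>
    hf.apply_eq fun _ hj => hg.apply_eq fun k hk => h k (hk.trans hj)

def window (c : X) (i R : ℤ) : Set X :=
  {u | (∀ j ≤ i, u j = c j) ∧ ∀ j, R < j → u j = 0}

def windowEquiv (c : X) {i R : ℤ} (hiR : i ≤ R) :
    window c i R ≃ (Set.Ioc i R → ZMod 2) where
  toFun u t := u.1 t
  invFun z :=
    ⟨fun j => if j ≤ i then c j else if h : j ∈ Set.Ioc i R then z ⟨j, h⟩ else 0,
      fun j hj => if_pos hj, fun j hj => by
        dsimp only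
        rw [if_neg (by omega), dif_neg fun h => absurd h.2 (by omega)]⟩
  left_inv u := by
    ext j
    dsimp only
    split_ifs with hj hIoc
    · exact (u.2.1 j hj).symm
    · rfl
    · have hRj : R < j := by simp only [Set.mem_Ioc, not_and, not_le] at hIoc; omega
      exact (u.2.2 j hRj).symm
  right_inv z := by
    funext t
    dsimp only
    rw [if_neg (not_le.2 t.2.1), dif_pos t.2]

/-- Pigeonhole: both windows are equivalent to `Set.Ioc i R → ZMod 2`. -/
theorem surjOn_window_of_mapsTo {f : X → X} (hf : Function.Injective f) {c d : X}
    {i R : ℤ} (hiR : i ≤ R) (h : Set.MapsTo f (window c i R) (window d i R)) :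
    Set.SurjOn f (window c i R) (window d i R) := by
  have : Finite (window d i R) := Finite.of_equiv _ (windowEquiv d hiR).symm
  have hbij := (h.restrict_inj.2 hf.injOn).bijective_of_nat_card_le
    (Nat.card_congr ((windowEquiv d hiR).trans (windowEquiv c hiR).symm)).le
  exact h.restrict_surjective_iff.1 hbij.2

theorem mapsTo_window {f : X ≃ₜ X} {r : ℤ}
    (hfix : ∀ (x : X) (j : ℤ), r ≤ |j| → f x j = x j) (hf : RightMoving f) (c : X)
    {i R : ℤ} (hrR : r ≤ R) :
    Set.MapsTo f (window c i R) (window (f c) i R) := fun u hu =>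
  ⟨fun j hj => hf.apply_eq fun k hk => hu.1 k (hk.trans hj), fun j hj => by
    rw [hfix u j (hrR.trans (hj.le.trans (le_abs_self j))), hu.2 j hj]⟩

theorem RightMoving.inv {f : X ≃ₜ X} (hl : IsLocalPerm f) (hr : RightMoving f) :
    RightMoving f⁻¹ := by
  obtain ⟨r, hfix⟩ := hl
  refine rightMoving_iff.2 fun x y i hxy => ?_
  set R := max r i
  obtain ⟨a, ha⟩ : (window (f.symm x) i R).Nonempty :=
    ⟨_, ((windowEquiv _ (le_max_right r i)).symm 0).2⟩
  have hfa : f a ∈ window y i R := by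
    have hmaps := mapsTo_window hfix hr _ (le_max_left r i) ha
    refine ⟨fun j hj => ?_, hmaps.2⟩
    rw [hmaps.1 j hj, f.apply_symm_apply, hxy j hj]
  have hsurj := surjOn_window_of_mapsTo f.injective (le_max_right r i)
    (f.apply_symm_apply y ▸ mapsTo_window hfix hr (f.symm y) (le_max_left r i))
  obtain ⟨b, hb, hba⟩ := hsurj hfa
  calc f.symm x i = a i := (ha.1 i le_rfl).symm
    _ = b i := by rw [f.injective hba]
    _ = f.symm y i := hb.1 i le_rfl

def rightMovingLocalPerms : Subgroup (X ≃ₜ X) where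
  carrier := {f | IsLocalPerm f ∧ RightMoving f}
  one_mem' := ⟨⟨0, fun _ _ _ => rfl⟩, rightMoving_iff.2 fun _ _ i h => h i le_rfl⟩
  mul_mem' hf hg := ⟨hf.1.mul hg.1, hf.2.mul hg.2⟩
  inv_mem' hf := ⟨hf.1.inv, hf.2.inv hf.1⟩

theorem shiftPow_add_s12 (m n : ℤ) : shiftPow (m + n) = shiftPow m * shiftPow n :=
  Homeomorph.ext fun x => funext fun i => congrArg x (by ring)

theorem shiftHomeo_zpow (n : ℤ) : shiftHomeo ^ n = shiftPow n := by
  induction n using Int.induction_on with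
  | zero => exact Homeomorph.ext fun x => funext fun i => congrArg x (add_zero i).symm
  | succ k ih => rw [zpow_add_one, ih, shiftPow_add_s12]; rfl
  | pred k ih =>
    rw [zpow_sub_one, ih, mul_inv_eq_iff_eq_mul]
    exact (congrArg shiftPow (sub_add_cancel _ 1)).symm.trans (shiftPow_add_s12 _ 1)

theorem IsLocalPerm.shiftPow_conj {f : X ≃ₜ X} (hf : IsLocalPerm f) (n : ℤ) :
    IsLocalPerm (shiftPow n * f * (shiftPow n)⁻¹) := by
  obtain ⟨r, hr⟩ := hf
  refine ⟨r + |n|, fun x i hi => ?_⟩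
  have hin : r ≤ |i + n| := by
    have := abs_add_le (i + n) (-n)
    rw [add_neg_cancel_right, abs_neg] at this
    linarith
  change f (shiftPow (-n) x) (i + n) = x i
  rw [hr _ _ hin]
  exact congrArg x (by ring)

theorem RightMoving.shiftPow_conj {f : X ≃ₜ X} (hf : RightMoving f) (n : ℤ) :
    RightMoving (shiftPow n * f * (shiftPow n)⁻¹) :=
  rightMoving_iff.2 fun _ _ _ h => hf.apply_eq fun j hj => h (j + -n) (by omega)

theorem shiftHomeo_mem_normalizer :
    shiftHomeo ∈ Subgroup.normalizer (rightMovingLocalPerms : Set (X ≃ₜ X)) := by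
  have hconj : ∀ (n : ℤ) {f}, f ∈ rightMovingLocalPerms →
      shiftHomeo ^ n * f * (shiftHomeo ^ n)⁻¹ ∈ rightMovingLocalPerms := fun n _ hf => by
    rw [shiftHomeo_zpow]
    exact ⟨hf.1.shiftPow_conj n, hf.2.shiftPow_conj n⟩
  refine Subgroup.mem_normalizer_iff.2 fun f =>
    ⟨fun hf => by simpa using hconj 1 hf, fun hf => ?_⟩
  convert hconj (-1) hf using 1
  group

theorem coe_zpowers_sup_rightMovingLocalPerms :
    ((Subgroup.zpowers shiftHomeo ⊔ rightMovingLocalPerms : Subgroup (X ≃ₜ X)) :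
        Set (X ≃ₜ X)) =
      {h | ∃ (n : ℤ) (f : X ≃ₜ X), IsLocalPerm f ∧ RightMoving f ∧
        h = f.trans (shiftPow n)} := by
  rw [Subgroup.coe_mul_of_left_le_normalizer_right _ _
    ((Subgroup.zpowers_le).2 shiftHomeo_mem_normalizer)]
  ext h
  simp only [Set.mem_mul, SetLike.mem_coe, Subgroup.mem_zpowers_iff, shiftHomeo_zpow]
  constructor
  · rintro ⟨_, ⟨n, rfl⟩, f, hf, rfl⟩
    exact ⟨n, f, hf.1, hf.2, rfl⟩
  · rintro ⟨n, f, hl, hr, rfl⟩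
    exact ⟨_, ⟨n, rfl⟩, f, ⟨hl, hr⟩, rfl⟩

theorem eq_zero_of_isLocalPerm_shiftPow {n : ℤ} (h : IsLocalPerm (shiftPow n)) : n = 0 := by
  obtain ⟨r, hr⟩ := h
  by_contra hn
  have := hr (fun j => if j = |r| then 1 else 0) |r| (by rw [abs_abs]; exact le_abs_self r)
  simp [shiftPow, hn] at this

def swapZeroOne : X ≃ₜ X :=
  mkInvHomeo (fun x => x ∘ Equiv.swap 0 1) (fun x => by ext; simp) (by fun_prop)

@[simp]
theorem swapZeroOne_apply (x : X) : swapZeroOne x = x ∘ Equiv.swap 0 1 := rfl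

theorem isLocalPerm_swapZeroOne : IsLocalPerm swapZeroOne :=
  ⟨2, fun x i hi => congrArg x (Equiv.swap_apply_of_ne_of_ne (by rintro rfl; simp at hi)
    (by rintro rfl; simp at hi))⟩

theorem not_rightMoving_swapZeroOne : ¬ RightMoving swapZeroOne := fun h => by
  have := h.apply_eq (u := 0) (v := fun j => if j = 1 then 1 else 0) (i := 0)
    fun j hj => by simp [show j ≠ 1 by omega]
  simp at this

theorem swapZeroOne_not_mem :
    swapZeroOne ∉
      (Subgroup.zpowers shiftHomeo ⊔ rightMovingLocalPerms : Subgroup (X ≃ₜ X)) := by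
  rw [← SetLike.mem_coe, coe_zpowers_sup_rightMovingLocalPerms]
  rintro ⟨n, f, hl, hr, hswap⟩
  have hshift : shiftPow n = swapZeroOne * f⁻¹ := eq_mul_inv_of_mul_eq hswap.symm
  obtain rfl := eq_zero_of_isLocalPerm_shiftPow (hshift ▸ isLocalPerm_swapZeroOne.mul hl.inv)
  have hf : swapZeroOne = f :=
    hswap.trans (Homeomorph.ext fun x => funext fun i => congrArg _ (add_zero i))
  exact not_rightMoving_swapZeroOne (hf ▸ hr)

/-- `G_R`, the set of maps `σ^n ∘ f` with `f` a right-moving local permutation, is a proper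
subgroup of `G`. -/
theorem stmt12 :
    ∃ H : Subgroup (X ≃ₜ X),
      (H : Set (X ≃ₜ X)) =
        {h : X ≃ₜ X | ∃ (n : ℤ) (f : X ≃ₜ X), IsLocalPerm f ∧ RightMoving f ∧
          h = f.trans (shiftPow n)} ∧
      H < Ggrp := by
  refine ⟨_, coe_zpowers_sup_rightMovingLocalPerms, SetLike.lt_iff_le_and_exists.2 ⟨?_, ?_⟩⟩
  · exact sup_le (Subgroup.zpowers_le.2 (Subgroup.subset_closure (Or.inl rfl)))
      fun f hf => Subgroup.subset_closure (Or.inr hf.1)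
  · exact ⟨swapZeroOne, Subgroup.subset_closure (Or.inr isLocalPerm_swapZeroOne),
      swapZeroOne_not_mem⟩
end
end
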